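/- The map ∂_Tree is a bijection from 𝒯* onto 𝒯𝒩; moreover, for every n ≥ 1 it restricts to a bijection from 𝒯*_n (planted trees with n+1 leaves) onto the set of elements of 𝒯𝒩 with n leaves. -/
import Mathlib


/-- Plane trees, inductively: a tree is a root together with an ordered (finite) list of
subtrees. -/
inductive PTree : Type
  | node : List PTree → PTree

namespace PTree

mutual
/-- The number of leaves of a plane tree (the single-vertex tree has one leaf). -/
def leaves : PTree → ℕ
  | .node [] => 1
  | .node (t :: ts) => leavesList (t :: ts)
/-- The total number of leaves of a list of plane trees. -/
def leavesList : List PTree → ℕ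
  | [] => 0
  | t :: ts => leaves t + leavesList ts
end

/-- The predicate that no vertex of the tree has outdegree 1. -/
inductive NoOut1 : PTree → Prop
  | node (ts : List PTree) : ts.length ≠ 1 → (∀ t ∈ ts, NoOut1 t) → NoOut1 (.node ts)

end PTree

/-- The two labels: parallel `P` and series `S`. -/
inductive Lab : Type
  | P : Lab
  | S : Lab
deriving DecidableEq

/-- `𝒯*`: planted trees, i.e. finite plane trees with no vertex of outdegree 1 whose root's
leftmost child is a leaf (labeled with `P` at even generations). -/
def Tstar : Set PTree :=
  {T | PTree.NoOut1 T ∧ ∃ ts : List PTree, T = .node (.node [] :: ts)}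

/-- `𝒯𝒩 = 𝒯𝒫 ∪ 𝒯𝒮 ∪ {•}`: either the trivial tree `•` (encoded by `none`) or a nontrivial
finite plane tree with no vertex of outdegree 1 together with a label in `{P, S}`. -/
def TN : Set (Option (PTree × Lab)) :=
  {x | x = none ∨ ∃ T ℓ, x = some (T, ℓ) ∧ PTree.NoOut1 T ∧ T ≠ .node []}

/-- The number of leaves of an element of `𝒯𝒩`; the trivial tree `•` has one leaf. -/
def TNleaves : Option (PTree × Lab) → ℕ
  | none => 1
  | some (T, _) => T.leaves

/-- The map `∂_Tree`: if the root has outdegree 2 and the tree has exactly two leaves, return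
`•`; if the root has outdegree 2 (and more than two leaves), remove the root and its leftmost
child, labeling the result by `S`; if the root has outdegree greater than 2, remove the leftmost
child of the root, labeling the result by `P`. -/
def dTree : PTree → Option (PTree × Lab)
  | .node [.node [], .node []] => none
  | .node [.node [], t] => some (t, Lab.S)
  | .node (.node [] :: ts) => some (.node ts, Lab.P)
  | _ => none

/-- Inverse of `∂_Tree`. -/
def gInv : Option (PTree × Lab) → PTree
  | none => .node [.node [], .node []]
  | some (t, Lab.S) => .node [.node [], t]
  | some (.node ts, Lab.P) => .node (.node [] :: ts)

lemma noOut1_leaf : PTree.NoOut1 (.node []) := by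
  exact .node [] (by simp) (by simp)

lemma dTree_P (a b : PTree) (rest : List PTree) :
    dTree (.node (.node [] :: a :: b :: rest)) = some (.node (a :: b :: rest), Lab.P) := by
  obtain ⟨la⟩ := a; cases la <;> rfl

lemma gInv_S (T : PTree) : gInv (some (T, Lab.S)) = .node [.node [], T] := by
  obtain ⟨l⟩ := T; cases l <;> rfl

lemma mapsTo_dTree : Set.MapsTo dTree Tstar TN := by
  rintro T ⟨h1, ts, rfl⟩
  cases h1 with
  | node _ hlen hall =>
  match ts with
  | [] => simp at hlen
  | [PTree.node []] => exact Or.inl rfl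
  | [PTree.node (u :: us)] =>
      refine Or.inr ⟨.node (u :: us), Lab.S, rfl, hall _ (by simp), by simp⟩
  | a :: b :: rest =>
      refine Or.inr ⟨.node (a :: b :: rest), Lab.P, dTree_P a b rest, ?_, by simp⟩
      exact .node _ (by simp) (fun t ht => hall t (by simp [ht]))

lemma mapsTo_gInv : Set.MapsTo gInv TN Tstar := by
  rintro x (rfl | ⟨T, ℓ, rfl, hT, hne⟩)
  · exact ⟨.node _ (by simp) (by simp [noOut1_leaf]), [.node []], rfl⟩
  · cases ℓ with
    | S =>
        rw [gInv_S]
        refine ⟨.node _ (by simp) ?_, [T], rfl⟩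
        intro t ht
        simp at ht
        rcases ht with rfl | rfl
        · exact noOut1_leaf
        · exact hT
    | P =>
        obtain ⟨ts⟩ := T
        cases hT with
        | node _ hlen hall =>
        have hts : ts ≠ [] := fun h => hne (by rw [h])
        refine ⟨.node _ ?_ ?_, ts, rfl⟩
        · simp [List.length_eq_zero_iff] at hlen ⊢
          exact hts
        · intro t ht
          simp at ht
          rcases ht with rfl | ht
          · exact noOut1_leaf
          · exact hall t ht

lemma leftInv : ∀ T ∈ Tstar, gInv (dTree T) = T := by
  rintro T ⟨h1, ts, rfl⟩
  cases h1 with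
  | node _ hlen hall =>
  match ts with
  | [] => simp at hlen
  | [PTree.node []] => rfl
  | [PTree.node (u :: us)] => rfl
  | a :: b :: rest => rw [dTree_P]; rfl

lemma rightInv : ∀ x ∈ TN, dTree (gInv x) = x := by
  rintro x (rfl | ⟨T, ℓ, rfl, hT, hne⟩)
  · rfl
  · cases ℓ with
    | S =>
        obtain ⟨ts⟩ := T
        match ts with
        | [] => exact absurd rfl hne
        | u :: us => rw [gInv_S]; rfl
    | P =>
        obtain ⟨ts⟩ := T
        cases hT with
        | node _ hlen hall =>
        match ts with
        | [] => exact absurd rfl hne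
        | [u] => simp at hlen
        | a :: b :: rest => exact dTree_P a b rest

lemma leaves_dTree : ∀ T ∈ Tstar, T.leaves = TNleaves (dTree T) + 1 := by
  rintro T ⟨h1, ts, rfl⟩
  cases h1 with
  | node _ hlen hall =>
  match ts with
  | [] => simp at hlen
  | [PTree.node []] => rfl
  | [PTree.node (u :: us)] =>
      simp [dTree, TNleaves, PTree.leaves, PTree.leavesList]
      omega
  | a :: b :: rest =>
      rw [dTree_P]
      simp [TNleaves, PTree.leaves, PTree.leavesList]
      omega

lemma bij_dTree : Set.BijOn dTree Tstar TN :=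
  Set.InvOn.bijOn ⟨leftInv, rightInv⟩ mapsTo_dTree mapsTo_gInv

/-- `∂_Tree` is a bijection from `𝒯*` onto `𝒯𝒩`, and for every `n ≥ 1` it restricts to a
bijection from the planted trees with `n + 1` leaves onto the elements of `𝒯𝒩` with `n`
leaves. -/
theorem stmt_12 :
    Set.BijOn dTree Tstar TN ∧
      ∀ n : ℕ, 1 ≤ n →
        Set.BijOn dTree {T | T ∈ Tstar ∧ T.leaves = n + 1}
          {x | x ∈ TN ∧ TNleaves x = n} := by
  refine ⟨bij_dTree, fun n _ => ⟨?_, bij_dTree.injOn.mono (fun x hx => hx.1), ?_⟩⟩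
  · rintro T ⟨hT, hl⟩
    refine ⟨mapsTo_dTree hT, ?_⟩
    have := leaves_dTree T hT
    omega
  · rintro y ⟨hy, hl⟩
    refine ⟨gInv y, ⟨mapsTo_gInv hy, ?_⟩, rightInv y hy⟩
    have := leaves_dTree (gInv y) (mapsTo_gInv hy)
    rw [rightInv y hy] at this
    omega
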